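/- Let u ∈ C²([0,1]) with m₂ ≤ u''(x) ≤ M₂ for all x ∈ [0,1], let 0 = x₀ < x₁ < … < x_{N+1} = 1 be a partition with hᵢ = x_{i+1} - xᵢ and h = max_{0≤i≤N} hᵢ. Then for every integer n ≥ 1: Σ_{i=0}^{N} ∫_{xᵢ}^{x_{i+1}} |u'(x) - (u(x_{i+1}) - u(xᵢ))/hᵢ| dx ≤ (h/2)·‖u''‖_∞ + (h/(8n))·(M₂ - m₂). -/

import Mathlib

/-!
On a cell `[a, b]` the mean value theorem gives `c` with `u' c` equal to the slope of the chord,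
so `|u' t - slope| ≤ ‖u''‖_∞ |t - c|`, whose integral is at most `‖u''‖_∞ (b - a)² / 2`.
Summing over the cells with `(b - a)² ≤ h (b - a)` gives `(h / 2) ‖u''‖_∞`; the second term of the
bound is nonnegative since `m₂ ≤ M₂`.
-/

open Set

theorem integral_abs_sub_eq {a b c : ℝ} (hc : c ∈ Icc a b) :
    ∫ t in a..b, |t - c| = ((c - a) ^ 2 + (b - c) ^ 2) / 2 := by
  have hint : ∀ p q : ℝ, IntervalIntegrable (fun t => |t - c|) MeasureTheory.volume p q :=
    fun p q => (continuous_abs.comp (continuous_id.sub continuous_const)).intervalIntegrable p q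
  rw [← intervalIntegral.integral_add_adjacent_intervals (hint a c) (hint c b)]
  have hleft : ∫ t in a..c, |t - c| = ∫ t in a..c, (c - t) := by
    refine intervalIntegral.integral_congr fun t ht => ?_
    rw [uIcc_of_le hc.1] at ht
    simp [abs_of_nonpos (sub_nonpos.2 ht.2)]
  have hright : ∫ t in c..b, |t - c| = ∫ t in c..b, (t - c) := by
    refine intervalIntegral.integral_congr fun t ht => ?_
    rw [uIcc_of_le hc.2] at ht
    simp [abs_of_nonneg (sub_nonneg.2 ht.1)]
  rw [hleft, hright, intervalIntegral.integral_comp_sub_left (fun x : ℝ => x),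
    intervalIntegral.integral_comp_sub_right (fun x : ℝ => x)]
  simp only [sub_self, integral_id]
  ring

theorem integral_abs_deriv_sub_slope_le {u u' u'' : ℝ → ℝ} {a b K : ℝ} (hab : a < b)
    (hu : ∀ t ∈ Icc a b, HasDerivWithinAt u (u' t) (Icc a b) t)
    (hu' : ∀ t ∈ Icc a b, HasDerivWithinAt u' (u'' t) (Icc a b) t)
    (hK : ∀ t ∈ Icc a b, |u'' t| ≤ K) :
    ∫ t in a..b, |u' t - (u b - u a) / (b - a)| ≤ K / 2 * (b - a) ^ 2 := by
  obtain ⟨c, hc, hslope⟩ := exists_hasDerivAt_eq_slope u u' hab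
    (fun t ht => (hu t ht).continuousWithinAt)
    (fun t ht => (hu t (Ioo_subset_Icc_self ht)).hasDerivAt (Icc_mem_nhds ht.1 ht.2))
  have hc' : c ∈ Icc a b := Ioo_subset_Icc_self hc
  have hlip : ∀ t ∈ Icc a b, |u' t - u' c| ≤ K * |t - c| := fun t ht => by
    simpa only [Real.norm_eq_abs] using
      (convex_Icc a b).norm_image_sub_le_of_norm_hasDerivWithin_le hu' hK hc' ht
  have hu'cont : ContinuousOn u' (Icc a b) := fun t ht => (hu' t ht).continuousWithinAt
  have hK0 : 0 ≤ K := (abs_nonneg _).trans (hK c hc')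
  rw [← hslope]
  calc ∫ t in a..b, |u' t - u' c|
      ≤ ∫ t in a..b, K * |t - c| := by
        refine intervalIntegral.integral_mono_on hab.le ?_ ?_ hlip
        · exact ContinuousOn.intervalIntegrable_of_Icc hab.le
            (hu'cont.sub continuousOn_const).abs
        · exact (continuous_const.mul
            (continuous_abs.comp (continuous_id.sub continuous_const))).intervalIntegrable a b
    _ = K * (((c - a) ^ 2 + (b - c) ^ 2) / 2) := by
        rw [intervalIntegral.integral_const_mul, integral_abs_sub_eq hc']
    _ ≤ K / 2 * (b - a) ^ 2 := by
        nlinarith [mul_nonneg hK0 (mul_nonneg (sub_nonneg.2 hc'.1) (sub_nonneg.2 hc'.2))]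

theorem mem_Icc_of_le_succ {X : ℕ → ℝ} {N i : ℕ} (hX : ∀ i ≤ N, X i ≤ X (i + 1))
    (hi : i ≤ N + 1) : X i ∈ Icc (X 0) (X (N + 1)) := by
  have hmono : MonotoneOn X (Iic (N + 1)) :=
    monotoneOn_of_le_add_one ordConnected_Iic fun j _ _ hj => hX j (by simpa using hj)
  exact ⟨hmono (mem_Iic.2 (Nat.zero_le _)) hi (Nat.zero_le i), hmono hi (mem_Iic.2 le_rfl) hi⟩

theorem sum_sq_sub_le_mul_sub {X : ℕ → ℝ} {N : ℕ} {h : ℝ} (hX : ∀ i ≤ N, X i ≤ X (i + 1))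
    (hh : ∀ i ≤ N, X (i + 1) - X i ≤ h) :
    ∑ i ∈ Finset.range (N + 1), (X (i + 1) - X i) ^ 2 ≤ h * (X (N + 1) - X 0) := by
  rw [← Finset.sum_range_sub, Finset.mul_sum]
  refine Finset.sum_le_sum fun i hi => ?_
  have hi : i ≤ N := Nat.lt_succ_iff.mp (Finset.mem_range.mp hi)
  rw [sq]
  exact mul_le_mul_of_nonneg_right (hh i hi) (sub_nonneg.2 (hX i hi))

theorem abs_le_iSup_abs_of_bounds {α : Type*} {f : α → ℝ} {s : Set α} {m M : ℝ}
    (hm : ∀ t ∈ s, m ≤ f t) (hM : ∀ t ∈ s, f t ≤ M) :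
    ∀ t ∈ s, |f t| ≤ ⨆ t : s, |f t| := fun t ht =>
  le_ciSup (f := fun t : s => |f t|)
    ⟨max |m| |M|, by
      rintro _ ⟨x, rfl⟩
      exact abs_le_max_abs_abs (hm x x.2) (hM x x.2)⟩ ⟨t, ht⟩

theorem interpolation_derivative_error_refined_general
    (N : ℕ) (u u' u'' : ℝ → ℝ) (m2 M2 : ℝ)
    (hu' : ∀ t ∈ Icc (0 : ℝ) 1, HasDerivWithinAt u (u' t) (Icc (0 : ℝ) 1) t)
    (hu'' : ∀ t ∈ Icc (0 : ℝ) 1, HasDerivWithinAt u' (u'' t) (Icc (0 : ℝ) 1) t)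
    (hm2 : ∀ t ∈ Icc (0 : ℝ) 1, m2 ≤ u'' t)
    (hM2 : ∀ t ∈ Icc (0 : ℝ) 1, u'' t ≤ M2)
    (X : ℕ → ℝ) (hX0 : X 0 = 0) (hXN : X (N + 1) = 1)
    (hXmono : ∀ i ≤ N, X i < X (i + 1))
    (h : ℝ) (hh : IsGreatest {d : ℝ | ∃ i ≤ N, d = X (i + 1) - X i} h) :
    ∀ n : ℕ, 1 ≤ n →
      ∑ i ∈ Finset.range (N + 1),
          ∫ t in (X i)..(X (i + 1)),
            |u' t - (u (X (i + 1)) - u (X i)) / (X (i + 1) - X i)|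
        ≤ (h / 2) * (⨆ t : Icc (0 : ℝ) 1, |u'' t|) + (h / (8 * n)) * (M2 - m2) := by
  intro n _
  set K := ⨆ t : Icc (0 : ℝ) 1, |u'' t|
  have hK : ∀ t ∈ Icc (0 : ℝ) 1, |u'' t| ≤ K := abs_le_iSup_abs_of_bounds hm2 hM2
  have hXle : ∀ i ≤ N, X i ≤ X (i + 1) := fun i hi => (hXmono i hi).le
  have hsub : ∀ i ≤ N, Icc (X i) (X (i + 1)) ⊆ Icc 0 1 := fun i hi => by
    rw [← hX0, ← hXN]
    exact Icc_subset_Icc (mem_Icc_of_le_succ hXle (by omega)).1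
      (mem_Icc_of_le_succ hXle (by omega)).2
  have hlocal : ∀ i ∈ Finset.range (N + 1),
      ∫ t in (X i)..(X (i + 1)), |u' t - (u (X (i + 1)) - u (X i)) / (X (i + 1) - X i)|
        ≤ K / 2 * (X (i + 1) - X i) ^ 2 := fun i hi => by
    have hi : i ≤ N := Nat.lt_succ_iff.mp (Finset.mem_range.mp hi)
    exact integral_abs_deriv_sub_slope_le (hXmono i hi)
      (fun t ht => (hu' t (hsub i hi ht)).mono (hsub i hi))
      (fun t ht => (hu'' t (hsub i hi ht)).mono (hsub i hi)) (fun t ht => hK t (hsub i hi ht))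
  have hK0 : 0 ≤ K := (abs_nonneg _).trans (hK 0 (by norm_num))
  have hh0 : 0 ≤ h := by
    obtain ⟨i, hi, rfl⟩ := hh.1
    exact sub_nonneg.2 (hXle i hi)
  have hM2m2 : 0 ≤ M2 - m2 := sub_nonneg.2 ((hm2 0 (by norm_num)).trans (hM2 0 (by norm_num)))
  calc _ ≤ ∑ i ∈ Finset.range (N + 1), K / 2 * (X (i + 1) - X i) ^ 2 := Finset.sum_le_sum hlocal
    _ = K / 2 * ∑ i ∈ Finset.range (N + 1), (X (i + 1) - X i) ^ 2 := Finset.mul_sum .. |>.symm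
    _ ≤ K / 2 * (h * (X (N + 1) - X 0)) := by
        gcongr
        exact sum_sq_sub_le_mul_sub hXle fun i hi => hh.2 ⟨i, hi, rfl⟩
    _ = h / 2 * K := by rw [hX0, hXN]; ring
    _ ≤ _ := le_add_of_nonneg_right (mul_nonneg (by positivity) hM2m2)

/-- Refined `L¹` estimate of the derivative of the interpolation error:
for `u ∈ C²([0,1])` with `m₂ ≤ u'' ≤ M₂`, a partition with mesh size `h`, and every `n ≥ 1`,
`Σᵢ ∫_{Xᵢ}^{X_{i+1}} |u'(x) - (u(X_{i+1})-u(Xᵢ))/hᵢ| dx ≤ (h/2)·‖u''‖_∞ + (h/(8n))·(M₂-m₂)`. -/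
theorem interpolation_derivative_error_refined
    (N : ℕ) (u u' u'' : ℝ → ℝ) (m2 M2 : ℝ)
    (hu' : ∀ t ∈ Icc (0 : ℝ) 1, HasDerivWithinAt u (u' t) (Icc (0 : ℝ) 1) t)
    (hu'' : ∀ t ∈ Icc (0 : ℝ) 1, HasDerivWithinAt u' (u'' t) (Icc (0 : ℝ) 1) t)
    (hu''cont : ContinuousOn u'' (Icc (0 : ℝ) 1))
    (hm2 : ∀ t ∈ Icc (0 : ℝ) 1, m2 ≤ u'' t)
    (hM2 : ∀ t ∈ Icc (0 : ℝ) 1, u'' t ≤ M2)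
    (X : ℕ → ℝ) (hX0 : X 0 = 0) (hXN : X (N + 1) = 1)
    (hXmono : ∀ i ≤ N, X i < X (i + 1))
    (h : ℝ) (hh : IsGreatest {d : ℝ | ∃ i ≤ N, d = X (i + 1) - X i} h) :
    ∀ n : ℕ, 1 ≤ n →
      ∑ i ∈ Finset.range (N + 1),
          ∫ t in (X i)..(X (i + 1)),
            |u' t - (u (X (i + 1)) - u (X i)) / (X (i + 1) - X i)|
        ≤ (h / 2) * (⨆ t : Icc (0 : ℝ) 1, |u'' t|) + (h / (8 * n)) * (M2 - m2) :=
  interpolation_derivative_error_refined_general N u u' u'' m2 M2 hu' hu'' hm2 hM2 X hX0 hXN hXmono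
    h hh
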